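/- arXiv:2404.15556 — 4 statements merged into one kernel-verified Lean document; each statement's English description precedes it below -/
import Mathlib

section
/- Let X be a topological space and let ζ : C_cc(X) → ℝ be a functional that is monotone and Lipschitz with respect to the supremum norm. A nonempty compact subset A ⊆ X is ζ-heavy (i.e. ζ(H) ≥ min_A H for every H ∈ C_cc(X)) if and only if for every H ∈ C_cc(X) and every c ∈ ℝ such that H ≡ c on some open neighborhood of A, one has ζ(H) ≥ c. -/
open Set

/-- `Ccc f` : `f` is continuous and differs from some constant by a compactly
supported function, i.e. `f ∈ C_cc(X)`. -/
def Ccc {X : Type*} [TopologicalSpace X] (f : X → ℝ) : Prop :=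
  Continuous f ∧ ∃ c : ℝ, HasCompactSupport (fun x => f x - c)

/-- Monotonicity of a functional on `C_cc(X)`. -/
def IsMonotoneFunctional {X : Type*} [TopologicalSpace X] (ζ : (X → ℝ) → ℝ) : Prop :=
  ∀ H₁ H₂ : X → ℝ, Ccc H₁ → Ccc H₂ → (∀ x, H₁ x ≤ H₂ x) → ζ H₁ ≤ ζ H₂

/-- Lipschitz continuity of a functional on `C_cc(X)` with respect to the
supremum norm: if `|H₁ - H₂| ≤ C` everywhere then `|ζ H₁ - ζ H₂| ≤ C`. -/
def IsLipschitzFunctional {X : Type*} [TopologicalSpace X] (ζ : (X → ℝ) → ℝ) : Prop :=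
  ∀ H₁ H₂ : X → ℝ, Ccc H₁ → Ccc H₂ → ∀ C : ℝ,
    (∀ x, |H₁ x - H₂ x| ≤ C) → |ζ H₁ - ζ H₂| ≤ C

/-- `A` is `ζ`-heavy: `ζ(H) ≥ min_A H` for every `H ∈ C_cc(X)`. -/
def IsHeavy {X : Type*} [TopologicalSpace X] (ζ : (X → ℝ) → ℝ) (A : Set X) : Prop :=
  ∀ H : X → ℝ, Ccc H → sInf (H '' A) ≤ ζ H

/-! If `H ≡ c` near `A` then `min_A H = c`, so heaviness gives `c ≤ ζ H`. Conversely, truncating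
`H` at a level `b` below `min_A H` yields a function in `C_cc(X)` that is `≤ H` and equal to `b`
on the open neighbourhood `{b < H}` of `A`, so monotonicity gives `b ≤ ζ H`. -/

theorem sInf_image_eq_of_eqOn {α : Type*} {A : Set α} (hAne : A.Nonempty) {H : α → ℝ} {c : ℝ}
    (hHc : EqOn H (fun _ => c) A) : sInf (H '' A) = c := by
  rw [hHc.image_eq, hAne.image_const, csInf_singleton]

section

variable {X : Type*} [TopologicalSpace X]

theorem Ccc.min_const {H : X → ℝ} (hH : Ccc H) (b : ℝ) : Ccc fun x => min (H x) b := by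
  obtain ⟨hcont, c, hc⟩ := hH
  refine ⟨hcont.min continuous_const, min c b, hc.mono fun x hx => ?_⟩
  rw [Function.mem_support] at hx ⊢
  contrapose! hx
  rw [sub_eq_zero.mp hx, sub_self]

theorem IsHeavy.le_of_eqOn {ζ : (X → ℝ) → ℝ} {A : Set X} (hheavy : IsHeavy ζ A)
    (hAne : A.Nonempty) {H : X → ℝ} (hH : Ccc H) {c : ℝ} (hHc : EqOn H (fun _ => c) A) :
    c ≤ ζ H :=
  sInf_image_eq_of_eqOn hAne hHc ▸ hheavy H hH

theorem IsMonotoneFunctional.le_of_lt_on {ζ : (X → ℝ) → ℝ} (hmono : IsMonotoneFunctional ζ)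
    {A : Set X}
    (hnear : ∀ (H : X → ℝ) (c : ℝ), Ccc H →
      (∃ U : Set X, IsOpen U ∧ A ⊆ U ∧ ∀ x ∈ U, H x = c) → c ≤ ζ H)
    {H : X → ℝ} (hH : Ccc H) {b : ℝ} (hb : ∀ x ∈ A, b < H x) : b ≤ ζ H := by
  have hG : Ccc fun x => min (H x) b := hH.min_const b
  have hGnear : ∃ U : Set X, IsOpen U ∧ A ⊆ U ∧ ∀ x ∈ U, min (H x) b = b :=
    ⟨{x | b < H x}, isOpen_lt continuous_const hH.1, hb, fun _ hx => min_eq_right hx.le⟩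
  calc b ≤ ζ fun x => min (H x) b := hnear _ b hG hGnear
    _ ≤ ζ H := hmono _ H hG hH fun _ => min_le_left _ _

end

theorem heavy_iff_constant_near_general
    {X : Type*} [TopologicalSpace X] (ζ : (X → ℝ) → ℝ)
    (hmono : IsMonotoneFunctional ζ)
    (A : Set X) (hA : IsCompact A) (hAne : A.Nonempty) :
    IsHeavy ζ A ↔
      ∀ (H : X → ℝ) (c : ℝ), Ccc H →
        (∃ U : Set X, IsOpen U ∧ A ⊆ U ∧ ∀ x ∈ U, H x = c) → c ≤ ζ H := by
  constructor
  · rintro hheavy H c hH ⟨U, -, hAU, hUc⟩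
    exact hheavy.le_of_eqOn hAne hH fun x hx => hUc x (hAU hx)
  · intro hnear H hH
    refine le_of_forall_sub_le fun ε hε => hmono.le_of_lt_on hnear hH fun x hx => ?_
    have hmin : sInf (H '' A) ≤ H x := csInf_le (hA.image hH.1).bddBelow (mem_image_of_mem H hx)
    linarith

theorem heavy_iff_constant_near
    {X : Type*} [TopologicalSpace X] (ζ : (X → ℝ) → ℝ)
    (hmono : IsMonotoneFunctional ζ) (hlip : IsLipschitzFunctional ζ)
    (A : Set X) (hA : IsCompact A) (hAne : A.Nonempty) :
    IsHeavy ζ A ↔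
      ∀ (H : X → ℝ) (c : ℝ), Ccc H →
        (∃ U : Set X, IsOpen U ∧ A ⊆ U ∧ ∀ x ∈ U, H x = c) → c ≤ ζ H :=
  heavy_iff_constant_near_general ζ hmono A hA hAne
end

section
/- Let X be a topological space, A ⊆ X a subset, c ∈ ℝ, and let f : X → ℝ be a continuous function with f ≡ c on A such that f − c₀ has compact support for some constant c₀ ∈ ℝ. Then for every ε > 0 there exists a continuous function g : X → ℝ such that sup_{x ∈ X} |g(x) − f(x)| ≤ ε, g ≡ c on some open neighborhood of A, and g − c₀' has compact support for some constant c₀' ∈ ℝ. (Explicitly, g = max(f − ε, min(f + ε, c)) works, being equal to c on the open set {x : |f(x) − c| < ε} ⊇ A.) -/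
open Set

theorem HasCompactSupport.comp_sub_comp_const {X M N : Type*} [TopologicalSpace X]
    [AddGroup M] [AddGroup N] {f : X → M} {a : M} (hf : HasCompactSupport (fun x => f x - a))
    (φ : M → N) : HasCompactSupport (fun x => φ (f x) - φ a) :=
  hf.mono fun x hx hfx => hx <| by simp only [sub_eq_zero.mp hfx, sub_self]

/-- The point of `[t - ε, t + ε]` closest to `c`. -/
def pullToward (c ε t : ℝ) : ℝ := max (t - ε) (min (t + ε) c)

theorem continuous_pullToward (c ε : ℝ) : Continuous (pullToward c ε) := by
  unfold pullToward
  fun_prop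

theorem abs_pullToward_sub_le (c : ℝ) {ε : ℝ} (hε : 0 ≤ ε) (t : ℝ) :
    |pullToward c ε t - t| ≤ ε := by
  have lower : t - ε ≤ pullToward c ε t := le_max_left _ _
  have upper : pullToward c ε t ≤ t + ε := max_le (by linarith) (min_le_left _ _)
  exact abs_sub_le_iff.mpr ⟨by linarith, by linarith⟩

theorem pullToward_of_abs_sub_lt {c ε t : ℝ} (h : |t - c| < ε) : pullToward c ε t = c := by
  obtain ⟨h₁, h₂⟩ := abs_lt.mp h
  rw [pullToward, min_eq_right (by linarith), max_eq_right (by linarith)]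

theorem approx_constant_on_neighborhood
    {X : Type*} [TopologicalSpace X] (A : Set X) (c : ℝ) (f : X → ℝ)
    (hf : Continuous f) (hfA : ∀ x ∈ A, f x = c)
    (hfc : ∃ c₀ : ℝ, HasCompactSupport (fun x => f x - c₀)) :
    ∀ ε : ℝ, 0 < ε →
      ∃ g : X → ℝ, Continuous g ∧ (∀ x, |g x - f x| ≤ ε) ∧
        (∃ U : Set X, IsOpen U ∧ A ⊆ U ∧ ∀ x ∈ U, g x = c) ∧
        ∃ c₀' : ℝ, HasCompactSupport (fun x => g x - c₀') := by
  intro ε hε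
  obtain ⟨c₀, hc₀⟩ := hfc
  have hU : IsOpen {x | |f x - c| < ε} := isOpen_lt (by fun_prop) continuous_const
  have hAU : A ⊆ {x | |f x - c| < ε} := fun x hx => by simpa [hfA x hx] using hε
  exact ⟨fun x => pullToward c ε (f x), (continuous_pullToward c ε).comp hf,
    fun x => abs_pullToward_sub_le c hε.le (f x),
    ⟨_, hU, hAU, fun x hx => pullToward_of_abs_sub_lt hx⟩,
    _, hc₀.comp_sub_comp_const (pullToward c ε)⟩
end

section
/- Let X be a metric space and let ζ : C_cc(X) → ℝ be a functional that is monotone and Lipschitz with respect to the supremum norm. Let (A_n)_{n∈ℕ} be a sequence of nonempty compact ζ-heavy subsets of X and let A ⊆ X be a nonempty compact subset such that the Hausdorff distance between A_n and A tends to 0 as n → ∞. Then A is ζ-heavy. -/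
open Set Filter

/-!
A function `H ∈ C_cc(X)` is uniformly continuous, so moving a set by less than `δ` in the
Hausdorff distance moves `min H` over it by at most `ε`. Hence
`min_B H ≤ min_{A_n} H + ε ≤ ζ H + ε` for `n` large, and `ε` is arbitrary.
-/

theorem Ccc.uniformContinuous {X : Type*} [UniformSpace X] {f : X → ℝ} (hf : Ccc f) :
    UniformContinuous f := by
  obtain ⟨hcont, c, hc⟩ := hf
  simpa using (hc.uniformContinuous_of_continuous (hcont.sub continuous_const)).add
    (uniformContinuous_const (b := c))

theorem csInf_image_le_add_of_forall_exists_le {α : Type*} {f : α → ℝ} {s t : Set α} {ε : ℝ}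
    (hs : s.Nonempty) (ht : BddBelow (f '' t)) (h : ∀ a ∈ s, ∃ b ∈ t, f b ≤ f a + ε) :
    sInf (f '' t) ≤ sInf (f '' s) + ε := by
  rw [← sub_le_iff_le_add]
  refine le_csInf (hs.image f) ?_
  rintro _ ⟨a, ha, rfl⟩
  obtain ⟨b, hb, hba⟩ := h a ha
  linarith [csInf_le ht (mem_image_of_mem f hb)]

theorem csInf_image_le_add_of_hausdorffDist_lt {X : Type*} [PseudoMetricSpace X] {f : X → ℝ}
    {s t : Set X} {δ ε : ℝ} (hs : s.Nonempty) (ht : BddBelow (f '' t))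
    (hfin : Metric.hausdorffEDist s t ≠ ⊤) (hst : Metric.hausdorffDist s t < δ)
    (hf : ∀ ⦃x y⦄, dist x y < δ → dist (f x) (f y) < ε) :
    sInf (f '' t) ≤ sInf (f '' s) + ε := by
  refine csInf_image_le_add_of_forall_exists_le hs ht fun a ha => ?_
  obtain ⟨b, hb, hab⟩ := Metric.exists_dist_lt_of_hausdorffDist_lt ha hst hfin
  have hfab := hf hab
  rw [Real.dist_eq, abs_lt] at hfab
  exact ⟨b, hb, by linarith⟩

theorem heavy_of_hausdorff_limit_general
    {X : Type*} [MetricSpace X] (ζ : (X → ℝ) → ℝ)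
    (A : ℕ → Set X) (hAcpt : ∀ n, IsCompact (A n)) (hAne : ∀ n, (A n).Nonempty)
    (hAheavy : ∀ n, IsHeavy ζ (A n))
    (B : Set X) (hB : IsCompact B) (hBne : B.Nonempty)
    (hconv : Tendsto (fun n => Metric.hausdorffDist (A n) B) atTop (nhds 0)) :
    IsHeavy ζ B := by
  intro H hH
  refine le_of_forall_pos_le_add fun ε hε => ?_
  obtain ⟨δ, hδ, hHδ⟩ := Metric.uniformContinuous_iff.mp hH.uniformContinuous ε hε
  obtain ⟨n, hn⟩ := (hconv.eventually (gt_mem_nhds hδ)).exists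
  have hfin : Metric.hausdorffEDist (A n) B ≠ ⊤ :=
    Metric.hausdorffEDist_ne_top_of_nonempty_of_bounded (hAne n) hBne
      (hAcpt n).isBounded hB.isBounded
  calc sInf (H '' B) ≤ sInf (H '' A n) + ε :=
        csInf_image_le_add_of_hausdorffDist_lt (hAne n) (hB.image hH.1).bddBelow hfin hn hHδ
    _ ≤ ζ H + ε := by gcongr; exact hAheavy n H hH

theorem heavy_of_hausdorff_limit
    {X : Type*} [MetricSpace X] (ζ : (X → ℝ) → ℝ)
    (hmono : IsMonotoneFunctional ζ) (hlip : IsLipschitzFunctional ζ)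
    (A : ℕ → Set X) (hAcpt : ∀ n, IsCompact (A n)) (hAne : ∀ n, (A n).Nonempty)
    (hAheavy : ∀ n, IsHeavy ζ (A n))
    (B : Set X) (hB : IsCompact B) (hBne : B.Nonempty)
    (hconv : Tendsto (fun n => Metric.hausdorffDist (A n) B) atTop (nhds 0)) :
    IsHeavy ζ B :=
  heavy_of_hausdorff_limit_general ζ A hAcpt hAne hAheavy B hB hBne hconv
end

section
/- Let X be a locally compact Hausdorff topological space and let ζ : C_cc(X) → ℝ be any functional. If A ⊆ X is a nonempty compact ζ-superheavy subset and B ⊆ X is a nonempty compact ζ-heavy subset, then A ∩ B ≠ ∅. -/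
open Set

/-- `A` is `ζ`-superheavy: `ζ(H) ≤ max_A H` for every `H ∈ C_cc(X)`. -/
def IsSuperheavy {X : Type*} [TopologicalSpace X] (ζ : (X → ℝ) → ℝ) (A : Set X) : Prop :=
  ∀ H : X → ℝ, Ccc H → ζ H ≤ sSup (H '' A)

section

variable {X : Type*} [TopologicalSpace X]

theorem ContinuousMap.ccc_of_hasCompactSupport {f : C(X, ℝ)} (hf : HasCompactSupport f) :
    Ccc f :=
  ⟨f.continuous, 0, by simpa using hf⟩

theorem IsHeavy.le_of_eqOn_const {ζ : (X → ℝ) → ℝ} {B : Set X} (hBh : IsHeavy ζ B)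
    (hBne : B.Nonempty) {H : X → ℝ} (hH : Ccc H) {c : ℝ} (hHc : EqOn H (fun _ => c) B) :
    c ≤ ζ H := by
  simpa [hHc.image_eq, hBne.image_const] using hBh H hH

theorem IsSuperheavy.le_of_eqOn_const {ζ : (X → ℝ) → ℝ} {A : Set X} (hAsh : IsSuperheavy ζ A)
    (hAne : A.Nonempty) {H : X → ℝ} (hH : Ccc H) {c : ℝ} (hHc : EqOn H (fun _ => c) A) :
    ζ H ≤ c := by
  simpa [hHc.image_eq, hAne.image_const] using hAsh H hH

end

theorem superheavy_inter_heavy_nonempty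
    {X : Type*} [TopologicalSpace X] [LocallyCompactSpace X] [T2Space X]
    (ζ : (X → ℝ) → ℝ)
    (A : Set X) (hA : IsCompact A) (hAne : A.Nonempty) (hAsh : IsSuperheavy ζ A)
    (B : Set X) (hB : IsCompact B) (hBne : B.Nonempty) (hBh : IsHeavy ζ B) :
    (A ∩ B).Nonempty := by
  by_contra hAB
  have hdisj : Disjoint B A := by
    rwa [disjoint_comm, Set.disjoint_iff_inter_eq_empty, ← Set.not_nonempty_iff_eq_empty]
  obtain ⟨f, hf1, hf0, hfc, -⟩ := exists_continuous_one_zero_of_isCompact hB hA.isClosed hdisj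
  have hCcc : Ccc f := ContinuousMap.ccc_of_hasCompactSupport hfc
  have h1 : 1 ≤ ζ f := hBh.le_of_eqOn_const hBne hCcc hf1
  have h0 : ζ f ≤ 0 := hAsh.le_of_eqOn_const hAne hCcc hf0
  linarith
end
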